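/- Let P ∈ K[T] be a nonzero polynomial with P(0) = 0 and write exp(P(T)) = ∑_{n≥0} b_n T^n ∈ K⟦T⟧. Then limsup_{n→∞} ‖b_n‖^{1/n} = sup_{n≥1} ‖b_n‖^{1/n}. (Equivalently: the radius of convergence of exp(P(T)) equals its radius of integrality.) -/

import Mathlib

open Filter

/-- The formal exponential `exp(f)` of a power series `f` (intended for `f` with zero
constant coefficient), defined coefficientwise by
`coeff n (exp f) = ∑_{k=0}^{n} (coeff n of f^k) / k!`. -/
noncomputable def pexp {K : Type*} [Field K] (f : PowerSeries K) : PowerSeries K :=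
  PowerSeries.mk fun n =>
    ∑ k ∈ Finset.range (n + 1), (k.factorial : K)⁻¹ * PowerSeries.coeff n (f ^ k)

/-!
Write `exp(P(T)) = ∑ bₙ Tⁿ`. Since `‖1/k!‖ ≤ pᵏ` the `bₙ` grow at most geometrically, so the
limsup is finite, and it suffices to show that `‖bₙ‖ ≤ ρⁿ` for all large `n` implies it for all `n`.
Otherwise let `M ≥ 1` be the first index maximising `‖bₙ‖ / ρⁿ`, pick a prime `q > deg P`, and let
`ω` be the root of the cyclotomic polynomial `Φ_q` in `K[X] ⧸ (Φ_q)`. As `∑ⱼ P(ωʲ T) = 0`, we have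
`∏ⱼ exp(P(ωʲ T)) = 1`. In the coefficient of `T^{qM}`, group the products `∏ⱼ b_{lⱼ}` by the class
of `∑ⱼ j lⱼ` mod `q`: since `1, ω, …, ω^{q-1}` satisfy only the relation `Φ_q(ω) = 0`, the sums
over all classes are equal. By the choice of `M`, the constant tuple `lⱼ = M` strictly dominates
every other term, so by the ultrametric inequality the sum over its class has absolute value
`‖b_M‖^q` while the sum over any other class is smaller, a contradiction.
-/

open Finset

namespace IsNonarchimedean

variable {R : Type*} [Ring R] {v : AbsoluteValue R ℝ}

theorem apply_sum_le_of_forall_le (hv : IsNonarchimedean v) {ι : Type*} {s : Finset ι}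
    {f : ι → R} {C : ℝ} (hC : 0 ≤ C) (h : ∀ i ∈ s, v (f i) ≤ C) : v (∑ i ∈ s, f i) ≤ C := by
  rcases s.eq_empty_or_nonempty with rfl | hs
  · simpa using hC
  · exact (hv.apply_sum_le_sup hs).trans (sup'_le hs _ h)

theorem apply_sum_lt_of_forall_lt (hv : IsNonarchimedean v) {ι : Type*} {s : Finset ι}
    {f : ι → R} {C : ℝ} (hC : 0 < C) (h : ∀ i ∈ s, v (f i) < C) : v (∑ i ∈ s, f i) < C := by
  rcases s.eq_empty_or_nonempty with rfl | hs
  · simpa using hC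
  · exact (hv.apply_sum_le_sup hs).trans_lt ((sup'_lt_iff hs).2 h)

theorem apply_natCast_eq_one_of_not_dvd [Nontrivial R] (hv : IsNonarchimedean v) {p m : ℕ}
    (hp : p.Prime) (hvp : v p < 1) (hpm : ¬ p ∣ m) : v m = 1 := by
  refine le_antisymm hv.apply_natCast_le_one (not_lt.1 fun hvm => ?_)
  obtain ⟨a, b, hab⟩ := Nat.isCoprime_iff_coprime.2 (hp.coprime_iff_not_dvd.2 hpm)
  have hsmall (z : ℤ) (n : ℕ) (hn : v n < 1) : v (z * n) < 1 := by
    rw [map_mul]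
    exact mul_lt_one_of_nonneg_of_lt_one_right hv.apply_intCast_le_one (v.nonneg _) hn
  have h1 : v (a * p + b * m : R) < 1 :=
    (hv _ _).trans_lt (max_lt (hsmall a p hvp) (hsmall b m hvm))
  exact h1.ne (by exact_mod_cast (congrArg (v ∘ Int.cast) hab).trans (by simp))

theorem apply_natCast_eq_pow_padicValNat [Nontrivial R] (hv : IsNonarchimedean v) {p m : ℕ}
    (hp : p.Prime) (hvp : v p < 1) (hm : m ≠ 0) : v m = v p ^ padicValNat p m := by
  have hsplit := Nat.ordProj_mul_ordCompl_eq_self m p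
  have hunit := hv.apply_natCast_eq_one_of_not_dvd hp hvp (Nat.not_dvd_ordCompl hp hm)
  rw [Nat.factorization_def m hp] at hsplit hunit
  calc v m = v (p ^ padicValNat p m * (m / p ^ padicValNat p m) : ℕ) := by rw [hsplit]
    _ = v p ^ padicValNat p m := by
      rw [Nat.cast_mul, map_mul, hunit, mul_one, Nat.cast_pow, map_pow]

theorem apply_coeff_pow_le_gaussNorm [Nontrivial R] (hv : IsNonarchimedean v)
    (P : Polynomial R) (k n : ℕ) : v ((P ^ k).coeff n) ≤ P.gaussNorm v 1 ^ k := by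
  have := Polynomial.gaussNorm_isAbsoluteValue hv one_pos
  simpa [IsAbsoluteValue.abv_pow] using (P ^ k).le_gaussNorm v zero_le_one n

end IsNonarchimedean

theorem IsNonarchimedean.apply_inv_factorial_le {K : Type*} [Field K] {v : AbsoluteValue K ℝ}
    (hv : IsNonarchimedean v) {p : ℕ} [Fact p.Prime] (hvp : v p = 1 / p) (k : ℕ) :
    v (k.factorial : K)⁻¹ ≤ (p : ℝ) ^ k := by
  have hp : p.Prime := Fact.out
  have hvp1 : v p < 1 := by
    rw [hvp, div_lt_one (by exact_mod_cast hp.pos)]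
    exact_mod_cast hp.one_lt
  rw [map_inv₀, hv.apply_natCast_eq_pow_padicValNat hp hvp1 k.factorial_ne_zero, hvp, one_div,
    inv_pow, inv_inv]
  exact pow_le_pow_right₀ (by exact_mod_cast hp.one_le) (padicValNat_factorial_le p k)

theorem Finset.exists_lt_of_sum_eq_card_mul {ι : Type*} {s : Finset ι} {l : ι → ℕ} {M : ℕ}
    (hsum : ∑ j ∈ s, l j = #s * M) (hne : ∃ j ∈ s, l j ≠ M) : ∃ j ∈ s, l j < M := by
  by_contra! h
  obtain ⟨j, hj, hjM⟩ := hne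
  have := sum_lt_sum h ⟨j, hj, (h j hj).lt_of_ne hjM.symm⟩
  simp [hsum] at this

theorem Finset.prod_lt_prod_of_nonneg {ι : Type*} {s : Finset ι} {f g : ι → ℝ}
    (hf : ∀ i ∈ s, 0 ≤ f i) (hg : ∀ i ∈ s, 0 < g i) (hfg : ∀ i ∈ s, f i ≤ g i)
    (hlt : ∃ i ∈ s, f i < g i) : ∏ i ∈ s, f i < ∏ i ∈ s, g i := by
  by_cases hzero : ∃ i ∈ s, f i = 0
  · obtain ⟨i, hi, hfi⟩ := hzero
    rw [prod_eq_zero hi hfi]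
    exact prod_pos hg
  · push Not at hzero
    exact prod_lt_prod (fun i hi => (hf i hi).lt_of_ne (hzero i hi).symm) hfg hlt

theorem Finsupp.exists_ne_of_ne_of_support_subset {ι M : Type*} [Zero M] {s : Finset ι}
    {l l' : ι →₀ M} (hl : l.support ⊆ s) (hl' : l'.support ⊆ s) (hne : l ≠ l') :
    ∃ j ∈ s, l j ≠ l' j := by
  by_contra! h
  refine hne (Finsupp.ext fun j => ?_)
  by_cases hj : j ∈ s
  · exact h j hj
  · rw [notMem_support_iff.1 fun h => hj (hl h), notMem_support_iff.1 fun h => hj (hl' h)]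

theorem Nat.exists_first_max_of_eventually_le {α : Type*} [LinearOrder α] {g : ℕ → α} {N : ℕ}
    (h : ∀ᶠ n in atTop, g n ≤ g N) : ∃ M, (∀ n, g n ≤ g M) ∧ ∀ n < M, g n < g M := by
  classical
  obtain ⟨m, hm⟩ := eventually_atTop.1 h
  obtain ⟨M₀, -, hM₀⟩ := (range (m + N + 1)).exists_max_image g ⟨N, mem_range.2 (by omega)⟩
  have hmax : ∃ M, ∀ n, g n ≤ g M := ⟨M₀, fun n =>
    if hn : n < m + N + 1 then hM₀ n (mem_range.2 hn)
    else (hm n (by omega)).trans (hM₀ N (mem_range.2 (by omega)))⟩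
  exact ⟨Nat.find hmax, Nat.find_spec hmax, fun n hn => (Nat.find_spec hmax n).lt_of_ne
    fun heq => Nat.find_min hmax hn fun k => heq ▸ Nat.find_spec hmax k⟩

theorem Real.rpow_one_div_le_iff {x y : ℝ} (hx : 0 ≤ x) (hy : 0 ≤ y) {n : ℕ} (hn : n ≠ 0) :
    x ^ (1 / (n : ℝ)) ≤ y ↔ x ≤ y ^ n := by
  rw [one_div, rpow_inv_le_iff_of_pos hx hy (by positivity), rpow_natCast]

theorem rpow_one_div_le_limsup {u : ℕ → ℝ} (hu : ∀ n, 0 ≤ u n)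
    (hbdd : IsBoundedUnder (· ≤ ·) atTop fun n => u n ^ (1 / (n : ℝ)))
    (h : ∀ ρ > 0, (∀ᶠ n in atTop, u n ≤ ρ ^ n) → ∀ n, u n ≤ ρ ^ n) {N : ℕ} (hN : N ≠ 0) :
    u N ^ (1 / (N : ℝ)) ≤ limsup (fun n => u n ^ (1 / (n : ℝ))) atTop := by
  refine le_of_forall_gt_imp_ge_of_dense fun ρ hρ => ?_
  have hρ0 : 0 < ρ :=
    (le_limsup_of_frequently_le (.of_forall fun n => by positivity [hu n]) hbdd).trans_lt hρ
  refine (Real.rpow_one_div_le_iff (hu N) hρ0.le hN).2 (h ρ hρ0 ?_ N)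
  filter_upwards [eventually_lt_of_limsup_lt hρ hbdd, eventually_ne_atTop 0] with n hn hn0
  exact (Real.rpow_one_div_le_iff (hu n) hρ0.le hn0).1 hn.le

theorem limsup_eq_iSup_succ_of_le_limsup {W : ℕ → ℝ} (hW : ∀ n, 0 ≤ W n)
    (h : ∀ n, W (n + 1) ≤ limsup W atTop) : limsup W atTop = ⨆ n, W (n + 1) := by
  refine le_antisymm (limsup_le_of_le (isBoundedUnder_of ⟨0, hW⟩).isCoboundedUnder_le ?_)
    (ciSup_le h)
  filter_upwards [eventually_ne_atTop 0] with n hn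
  obtain ⟨m, rfl⟩ := Nat.exists_eq_succ_of_ne_zero hn
  exact le_ciSup ⟨_, Set.forall_mem_range.2 h⟩ m

theorem pow_eq_one_of_geom_sum_eq_zero {A : Type*} [CommRing A] {ω : A} {q : ℕ}
    (hω : ∑ j ∈ range q, ω ^ j = 0) : ω ^ q = 1 := by
  have h := geom_sum_mul ω q
  rwa [hω, zero_mul, eq_comm, sub_eq_zero] at h

-- The sum `S` is fixed by `ω ^ i`, hence by its power `ω`, so `q • S = (∑ j, ω ^ j) * S = 0`.
theorem geom_sum_pow_eq_zero_of_coprime {A : Type*} [CommRing A] [IsAddTorsionFree A] {ω : A}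
    {q i : ℕ} (hq : 1 < q) (hω : ∑ j ∈ range q, ω ^ j = 0) (hi : i.Coprime q) :
    ∑ j ∈ range q, (ω ^ i) ^ j = 0 := by
  set S := ∑ j ∈ range q, (ω ^ i) ^ j
  have hωq := pow_eq_one_of_geom_sum_eq_zero hω
  have pow_mul_S {x : A} (hx : x * S = S) (k : ℕ) : x ^ k * S = S := by
    induction k with
    | zero => simp
    | succ k ih => rw [pow_succ, mul_assoc, hx, ih]
  have hxS : ω ^ i * S = S := by
    have h := geom_sum_mul (ω ^ i) q
    rwa [← pow_mul, mul_comm i q, pow_mul, hωq, one_pow, sub_self, mul_sub, mul_one, sub_eq_zero,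
      mul_comm] at h
  obtain ⟨m, -, hm⟩ := Nat.exists_mul_mod_eq_one_of_coprime hi hq
  have hωS : ω * S = S := by
    have h := pow_mul_S hxS m
    rwa [← pow_mul, pow_eq_pow_mod _ hωq, hm, pow_one] at h
  have hqS : q • S = 0 :=
    calc q • S = ∑ j ∈ range q, ω ^ j * S := by simp [pow_mul_S hωS]
      _ = 0 := by rw [← sum_mul, hω, zero_mul]
  exact (smul_eq_zero.1 hqS).resolve_left (by omega)

open Polynomial in
theorem AdjoinRoot.geom_sum_root_cyclotomic_eq_zero {R : Type*} [CommRing R] (q : ℕ)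
    [Fact q.Prime] : ∑ j ∈ range q, root (cyclotomic q R) ^ j = 0 := by
  have h : mk (cyclotomic q R) (∑ j ∈ range q, X ^ j) = 0 := by
    rw [← cyclotomic_prime]
    exact mk_self
  simpa [map_sum] using h

-- `cyclotomic q R` need not be irreducible, but in `R[X] ⧸ (cyclotomic q R)` the only relations
-- among `1, root, …, root ^ (q - 1)` are the multiples of `cyclotomic q R = ∑ j < q, X ^ j`.
open Polynomial in
theorem AdjoinRoot.eq_of_sum_of_mul_root_pow_eq_zero {R : Type*} [CommRing R] [Nontrivial R]
    {q : ℕ} [Fact q.Prime] {c : ℕ → R}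
    (h : ∑ i ∈ range q, of (cyclotomic q R) (c i) * root (cyclotomic q R) ^ i = 0)
    {i j : ℕ} (hi : i < q) (hj : j < q) : c i = c j := by
  set g : R[X] := ∑ i ∈ range q, C (c i) * X ^ i
  have hdvd : cyclotomic q R ∣ g := mk_eq_zero.1 (by simpa [g, map_sum] using h)
  have hdeg : g.natDegree ≤ (cyclotomic q R).natDegree := by
    rw [natDegree_cyclotomic, Nat.totient_prime Fact.out]
    refine natDegree_sum_le_of_forall_le _ _ fun k hk => (natDegree_C_mul_X_pow_le _ _).trans ?_
    have := mem_range.1 hk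
    omega
  obtain ⟨a, hg⟩ : ∃ a, g = C a * cyclotomic q R :=
    ⟨_, eq_leadingCoeff_mul_of_monic_of_dvd_of_natDegree_le (cyclotomic.monic q R) hdvd hdeg⟩
  have hcoeff {k : ℕ} (hk : k < q) : c k = a := by
    have hgk : g.coeff k = c k := by simp [g, finsetSum_coeff, hk]
    rw [← hgk, hg, coeff_C_mul, cyclotomic_prime]
    simp [finsetSum_coeff, coeff_X_pow, hk]
  rw [hcoeff hi, hcoeff hj]

open PowerSeries

namespace PowerSeries

theorem coeff_pow_eq_zero_of_lt {R : Type*} [Semiring R] {f : R⟦X⟧}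
    (hf : constantCoeff f = 0) {n d : ℕ} (h : n < d) : coeff n (f ^ d) = 0 :=
  coeff_of_lt_order n ((Nat.cast_lt.2 h).trans_le (le_order_pow_of_constantCoeff_eq_zero d hf))

theorem constantCoeff_rescale {R : Type*} [CommSemiring R] (c : R) (f : R⟦X⟧) :
    constantCoeff (rescale c f) = constantCoeff f := by
  rw [← coeff_zero_eq_constantCoeff_apply, coeff_rescale, pow_zero, one_mul,
    coeff_zero_eq_constantCoeff_apply]

theorem sum_rescale_pow_eq_zero {R : Type*} [CommRing R] [IsAddTorsionFree R] {q : ℕ}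
    [Fact q.Prime] {ω : R} (hω : ∑ j ∈ range q, ω ^ j = 0) {f : R⟦X⟧}
    (hf : ∀ m, coeff m f ≠ 0 → 0 < m ∧ m < q) : ∑ j ∈ range q, rescale (ω ^ j) f = 0 := by
  ext m
  simp only [map_sum, coeff_rescale, map_zero, ← sum_mul]
  rcases eq_or_ne (coeff m f) 0 with hc | hc
  · rw [hc, mul_zero]
  obtain ⟨hm, hmq⟩ := hf m hc
  have hq : q.Prime := Fact.out
  have hcop : m.Coprime q := (hq.coprime_iff_not_dvd.2 (Nat.not_dvd_of_pos_of_lt hm hmq)).symm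
  rw [sum_congr rfl fun j _ => by rw [← pow_mul, mul_comm, pow_mul],
    geom_sum_pow_eq_zero_of_coprime hq.one_lt hω hcop, zero_mul]

variable {A : Type*} [CommRing A] [Algebra ℚ A] {f g : A⟦X⟧}

theorem constantCoeff_subst_exp (hf : constantCoeff f = 0) :
    constantCoeff ((exp A).subst f) = 1 := by
  rw [← coeff_zero_eq_constantCoeff_apply, coeff_subst' (.of_constantCoeff_zero' hf),
    finsum_eq_single _ 0 fun d hd => by simp [coeff_zero_eq_constantCoeff, hf, hd]]
  simp

theorem derivative_subst_exp (hf : constantCoeff f = 0) :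
    d⁄dX A ((exp A).subst f) = (exp A).subst f * d⁄dX A f := by
  rw [derivative_subst (.of_constantCoeff_zero' hf), derivative_exp]

theorem subst_exp_mul_subst_exp_neg (hf : constantCoeff f = 0) :
    (exp A).subst f * (exp A).subst (-f) = 1 := by
  have : IsAddTorsionFree A := .of_module_rat A
  have hnf : constantCoeff (-f) = 0 := by simp [hf]
  refine derivative.ext ?_ (by simp [constantCoeff_subst_exp hf, constantCoeff_subst_exp hnf])
  rw [Derivation.leibniz, derivative_subst_exp hf, derivative_subst_exp hnf, map_neg,
    derivative_one, smul_eq_mul, smul_eq_mul]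
  ring

theorem eq_subst_exp_of_derivative_eq_mul {y : A⟦X⟧} (hy : d⁄dX A y = y * d⁄dX A f)
    (hy0 : constantCoeff y = 1) (hf : constantCoeff f = 0) : y = (exp A).subst f := by
  have : IsAddTorsionFree A := .of_module_rat A
  have hnf : constantCoeff (-f) = 0 := by simp [hf]
  have hinv : y * (exp A).subst (-f) = 1 := by
    refine derivative.ext ?_ (by simp [hy0, constantCoeff_subst_exp hnf])
    rw [Derivation.leibniz, hy, derivative_subst_exp hnf, map_neg, derivative_one,
      smul_eq_mul, smul_eq_mul]
    ring
  calc y = y * ((exp A).subst f * (exp A).subst (-f)) := by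
        rw [subst_exp_mul_subst_exp_neg hf, mul_one]
    _ = (exp A).subst f * (y * (exp A).subst (-f)) := by ring
    _ = (exp A).subst f := by rw [hinv, mul_one]

theorem subst_exp_add (hf : constantCoeff f = 0) (hg : constantCoeff g = 0) :
    (exp A).subst (f + g) = (exp A).subst f * (exp A).subst g := by
  refine (eq_subst_exp_of_derivative_eq_mul ?_ ?_ (by simp [hf, hg])).symm
  · rw [Derivation.leibniz, derivative_subst_exp hf, derivative_subst_exp hg, map_add,
      smul_eq_mul, smul_eq_mul]
    ring
  · simp [constantCoeff_subst_exp hf, constantCoeff_subst_exp hg]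

theorem subst_exp_zero : (exp A).subst (0 : A⟦X⟧) = 1 :=
  (eq_subst_exp_of_derivative_eq_mul (by simp) (by simp) (by simp)).symm

theorem prod_subst_exp {ι : Type*} (s : Finset ι) (f : ι → A⟦X⟧)
    (hf : ∀ i ∈ s, constantCoeff (f i) = 0) :
    ∏ i ∈ s, (exp A).subst (f i) = (exp A).subst (∑ i ∈ s, f i) := by
  classical
  induction s using Finset.induction_on with
  | empty => simp [subst_exp_zero]
  | insert a s ha ih =>
    rw [prod_insert ha, sum_insert ha, ih fun i hi => hf i (mem_insert_of_mem hi),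
      subst_exp_add (hf a (mem_insert_self a s))]
    simp only [map_sum]
    exact sum_eq_zero fun i hi => hf i (mem_insert_of_mem hi)

theorem rescale_subst_exp (c : A) (hf : constantCoeff f = 0) :
    rescale c ((exp A).subst f) = (exp A).subst (rescale c f) := by
  rw [rescale_eq_subst, rescale_eq_subst,
    subst_comp_subst_apply (.of_constantCoeff_zero' hf) (.smul_X' c)]

end PowerSeries

-- Since `M` is the *first* maximiser of `v (b n) / ρ ^ n`, a tuple summing to `#s * M` that is not
-- constant has an entry `l j < M`, where the inequality is strict.
theorem AbsoluteValue.apply_prod_lt_pow_of_first_max {R : Type*} [CommRing R] [Nontrivial R]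
    (v : AbsoluteValue R ℝ) {b : ℕ → R} {ρ : ℝ} (hρ : 0 < ρ) {M : ℕ}
    (hle : ∀ n, v (b n) / ρ ^ n ≤ v (b M) / ρ ^ M)
    (hlt : ∀ n < M, v (b n) / ρ ^ n < v (b M) / ρ ^ M) {ι : Type*} {s : Finset ι} {l : ι → ℕ}
    (hsum : ∑ j ∈ s, l j = #s * M) (hne : ∃ j ∈ s, l j ≠ M) :
    v (∏ j ∈ s, b (l j)) < v (b M) ^ #s := by
  set g : ℕ → ℝ := fun n => v (b n) / ρ ^ n
  have hvb (n : ℕ) : v (b n) = g n * ρ ^ n := by simp [g, hρ.ne']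
  obtain ⟨j, hj, hjM⟩ := exists_lt_of_sum_eq_card_mul hsum hne
  have hgM : 0 < g M := (div_nonneg (v.nonneg _) (by positivity)).trans_lt (hlt _ hjM)
  calc v (∏ j ∈ s, b (l j)) = ∏ j ∈ s, g (l j) * ρ ^ l j := by rw [map_prod]; simp only [hvb]
    _ < ∏ j ∈ s, g M * ρ ^ l j :=
        prod_lt_prod_of_nonneg (fun j _ => by positivity) (fun j _ => by positivity [hgM])
          (fun j _ => by gcongr; exact hle _) ⟨j, hj, by gcongr; exact hlt _ hjM⟩
    _ = v (b M) ^ #s := by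
        rw [prod_mul_distrib, prod_const, prod_pow_eq_pow_sum, hsum, hvb, mul_pow, ← pow_mul,
          mul_comm M]

section Field

variable {K : Type*} [Field K] {v : AbsoluteValue K ℝ}

theorem IsNonarchimedean.apply_coeff_pexp_le (hv : IsNonarchimedean v) {p : ℕ} [Fact p.Prime]
    (hvp : v p = 1 / p) (P : Polynomial K) (n : ℕ) :
    v (coeff n (pexp (P : K⟦X⟧))) ≤ (p * max 1 (P.gaussNorm v 1)) ^ n := by
  set C := max 1 (P.gaussNorm v 1)
  have hpC : 1 ≤ (p : ℝ) * C := one_le_mul_of_one_le_of_one_le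
    (by exact_mod_cast (Fact.out : p.Prime).one_le) (le_max_left _ _)
  rw [pexp, coeff_mk]
  refine hv.apply_sum_le_of_forall_le (by positivity) fun k hk => ?_
  rw [map_mul, ← Polynomial.coe_pow, Polynomial.coeff_coe]
  calc v (k.factorial : K)⁻¹ * v ((P ^ k).coeff n) ≤ p ^ k * C ^ k := by
        gcongr
        · exact hv.apply_inv_factorial_le hvp k
        · exact (hv.apply_coeff_pow_le_gaussNorm P k n).trans
            (pow_le_pow_left₀ (P.gaussNorm_nonneg v zero_le_one) (le_max_right _ _) k)
    _ ≤ (p * C) ^ n := by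
      rw [← mul_pow]
      exact pow_le_pow_right₀ hpC (Nat.lt_succ_iff.1 (mem_range.1 hk))

theorem IsNonarchimedean.isBoundedUnder_apply_coeff_pexp_rpow (hv : IsNonarchimedean v) {p : ℕ}
    [Fact p.Prime] (hvp : v p = 1 / p) (P : Polynomial K) :
    IsBoundedUnder (· ≤ ·) atTop fun n => v (coeff n (pexp (P : K⟦X⟧))) ^ (1 / (n : ℝ)) := by
  refine isBoundedUnder_of_eventually_le (a := p * max 1 (P.gaussNorm v 1)) ?_
  filter_upwards [eventually_ne_atTop 0] with n hn
  exact (Real.rpow_one_div_le_iff (v.nonneg _) (by positivity) hn).2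
    (hv.apply_coeff_pexp_le hvp P n)

-- If `F = ∑ b n * T ^ n` and `ω ^ q = 1`, this is the coefficient of `ω ^ i` in the coefficient
-- of `T ^ n` in `∏ j < q, F (ω ^ j * T)`.
def weightClassSum (b : ℕ → K) (q n i : ℕ) : K :=
  ∑ l ∈ (range q).finsuppAntidiag n with (∑ j ∈ range q, j * l j) % q = i, ∏ j ∈ range q, b (l j)

theorem IsNonarchimedean.exists_apply_weightClassSum_ne (hv : IsNonarchimedean v) {b : ℕ → K}
    {ρ : ℝ} (hρ : 0 < ρ) {M : ℕ} (hbM : b M ≠ 0) (hle : ∀ n, v (b n) / ρ ^ n ≤ v (b M) / ρ ^ M)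
    (hlt : ∀ n < M, v (b n) / ρ ^ n < v (b M) / ρ ^ M) {q : ℕ} (hq : 1 < q) :
    ∃ i < q, ∃ i' < q, v (weightClassSum b q (q * M) i) ≠ v (weightClassSum b q (q * M) i') := by
  classical
  set l₀ : ℕ →₀ ℕ := Finsupp.indicator (range q) fun _ _ => M
  have hl₀ {j : ℕ} (hj : j ∈ range q) : l₀ j = M := by simp [l₀, Finsupp.indicator_apply, hj]
  have hl₀mem : l₀ ∈ (range q).finsuppAntidiag (q * M) :=
    mem_finsuppAntidiag.2 ⟨by simp [sum_congr rfl fun j => hl₀],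
      Finsupp.support_indicator_subset _ _⟩
  have hsmall : ∀ l ∈ (range q).finsuppAntidiag (q * M), l ≠ l₀ →
      v (∏ j ∈ range q, b (l j)) < v (b M) ^ q := by
    intro l hl hne
    obtain ⟨hsum, hsupp⟩ := mem_finsuppAntidiag.1 hl
    obtain ⟨j, hj, hjne⟩ := Finsupp.exists_ne_of_ne_of_support_subset hsupp
      (mem_finsuppAntidiag.1 hl₀mem).2 hne
    simpa using v.apply_prod_lt_pow_of_first_max hρ hle hlt (by simpa using hsum)
      ⟨j, hj, hl₀ hj ▸ hjne⟩
  have hl₀prod : v (∏ j ∈ range q, b (l₀ j)) = v (b M) ^ q := by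
    rw [prod_congr rfl fun j hj => by rw [hl₀ hj], prod_const, card_range, map_pow]
  set i₀ := (∑ j ∈ range q, j * l₀ j) % q
  have hmem : l₀ ∈ ((range q).finsuppAntidiag (q * M)).filter
      fun l => (∑ j ∈ range q, j * l j) % q = i₀ :=
    mem_filter.2 ⟨hl₀mem, rfl⟩
  have hv₀ : v (weightClassSum b q (q * M) i₀) = v (b M) ^ q := by
    rw [weightClassSum, hv.apply_sum_eq_of_lt (fun a => (v.map_neg a).symm) hmem
      fun l hl hne => hl₀prod ▸ hsmall l (mem_filter.1 hl).1 hne, hl₀prod]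
  obtain ⟨i₁, hi₁q, hi₁⟩ : ∃ i₁ < q, i₁ ≠ i₀ :=
    ⟨if i₀ = 0 then 1 else 0, by split_ifs <;> omega, by split_ifs <;> omega⟩
  have hv₁ : v (weightClassSum b q (q * M) i₁) < v (b M) ^ q := by
    refine hv.apply_sum_lt_of_forall_lt (pow_pos (v.pos hbM) q) fun l hl =>
      hsmall l (mem_filter.1 hl).1 ?_
    rintro rfl
    exact hi₁ (mem_filter.1 hl).2.symm
  exact ⟨i₀, Nat.mod_lt _ (by omega), i₁, hi₁q, hv₀.trans_ne hv₁.ne'⟩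

end Field

section CharZero

variable {K : Type*} [Field K] [CharZero K]

theorem pexp_eq_subst_exp {f : K⟦X⟧} (hf : constantCoeff f = 0) : pexp f = (exp K).subst f := by
  ext n
  rw [coeff_subst' (.of_constantCoeff_zero' hf),
    finsum_eq_sum_of_support_subset (s := range (n + 1)) _ fun d hd => ?_]
  · simp [pexp, coeff_exp, smul_eq_mul]
  · by_contra hdn
    exact hd (by simp only [coeff_pow_eq_zero_of_lt hf (by simpa using hdn), smul_zero])

theorem map_pexp_eq_subst_exp {R : Type*} [CommRing R] [Algebra ℚ R] (φ : K →+* R)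
    {f : K⟦X⟧} (hf : constantCoeff f = 0) : map φ (pexp f) = (exp R).subst (map φ f) := by
  rw [pexp_eq_subst_exp hf]
  exact (map_subst (.of_constantCoeff_zero' hf) (exp K)).trans (by rw [map_exp]; rfl)

theorem prod_rescale_map_pexp_eq_one {R : Type*} [CommRing R] [Algebra ℚ R] (φ : K →+* R)
    {q : ℕ} [Fact q.Prime] {ω : R} (hω : ∑ j ∈ range q, ω ^ j = 0) {P : Polynomial K}
    (hP0 : P.coeff 0 = 0) (hPq : P.natDegree < q) :
    ∏ j ∈ range q, rescale (ω ^ j) (map φ (pexp (P : K⟦X⟧))) = 1 := by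
  have : IsAddTorsionFree R := .of_module_rat R
  have hP0' : constantCoeff (P : K⟦X⟧) = 0 := by
    rwa [← coeff_zero_eq_constantCoeff_apply, Polynomial.coeff_coe]
  have hf0 : constantCoeff (map φ (P : K⟦X⟧)) = 0 := by
    rw [← coeff_zero_eq_constantCoeff_apply, coeff_map, coeff_zero_eq_constantCoeff_apply, hP0',
      map_zero]
  have hsum : ∑ j ∈ range q, rescale (ω ^ j) (map φ (P : K⟦X⟧)) = 0 := by
    refine sum_rescale_pow_eq_zero hω fun m hm => ?_
    have hc : P.coeff m ≠ 0 := fun h => hm (by simp [h])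
    exact ⟨Nat.pos_of_ne_zero fun h => hc (h ▸ hP0),
      (Polynomial.le_natDegree_of_ne_zero hc).trans_lt hPq⟩
  rw [map_pexp_eq_subst_exp φ hP0', prod_congr rfl fun j _ => rescale_subst_exp (ω ^ j) hf0,
    prod_subst_exp _ _ fun j _ => by rw [constantCoeff_rescale, hf0], hsum, subst_exp_zero]

theorem weightClassSum_coeff_pexp_eq {q : ℕ} [Fact q.Prime] {P : Polynomial K}
    (hP0 : P.coeff 0 = 0) (hPq : P.natDegree < q) {n : ℕ} (hn : n ≠ 0) {i i' : ℕ} (hi : i < q)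
    (hi' : i' < q) :
    weightClassSum (fun m => coeff m (pexp (P : K⟦X⟧))) q n i =
      weightClassSum (fun m => coeff m (pexp (P : K⟦X⟧))) q n i' := by
  classical
  set Φ := Polynomial.cyclotomic q K
  set ω := AdjoinRoot.root Φ
  set b := fun m => coeff m (pexp (P : K⟦X⟧))
  set F := map (algebraMap K (AdjoinRoot Φ)) (pexp (P : K⟦X⟧))
  have hω : ∑ j ∈ range q, ω ^ j = 0 := AdjoinRoot.geom_sum_root_cyclotomic_eq_zero q
  have h := congrArg (coeff n) (prod_rescale_map_pexp_eq_one (algebraMap K _) hω hP0 hPq)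
  rw [coeff_one, if_neg hn, coeff_prod] at h
  have hterm (l : ℕ →₀ ℕ) : ∏ j ∈ range q, coeff (l j) (rescale (ω ^ j) F) =
      AdjoinRoot.of Φ (∏ j ∈ range q, b (l j)) * ω ^ ((∑ j ∈ range q, j * l j) % q) := by
    simp only [F, coeff_rescale, coeff_map, prod_mul_distrib, ← pow_mul, prod_pow_eq_pow_sum,
      map_prod, ← pow_eq_pow_mod _ (pow_eq_one_of_geom_sum_eq_zero hω), AdjoinRoot.algebraMap_eq,
      b]
    ring
  rw [sum_congr rfl fun l _ => hterm l, ← sum_fiberwise_of_maps_to (t := range q)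
    (g := fun l => (∑ j ∈ range q, j * l j) % q)
    fun l _ => mem_range.2 (Nat.mod_lt _ (Fact.out : q.Prime).pos)] at h
  refine AdjoinRoot.eq_of_sum_of_mul_root_pow_eq_zero (c := weightClassSum b q n) ?_ hi hi'
  rw [← h]
  refine sum_congr rfl fun k _ => ?_
  rw [weightClassSum, map_sum, sum_mul]
  exact sum_congr rfl fun l hl => by rw [(mem_filter.1 hl).2]

theorem IsNonarchimedean.apply_coeff_pexp_le_pow_of_eventually_le {v : AbsoluteValue K ℝ}
    (hv : IsNonarchimedean v) {P : Polynomial K} (hP0 : P.coeff 0 = 0) {ρ : ℝ} (hρ : 0 < ρ)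
    (h : ∀ᶠ n in atTop, v (coeff n (pexp (P : K⟦X⟧))) ≤ ρ ^ n) (N : ℕ) :
    v (coeff N (pexp (P : K⟦X⟧))) ≤ ρ ^ N := by
  set b := fun n => coeff n (pexp (P : K⟦X⟧))
  by_contra! hN
  have hgN : 1 < v (b N) / ρ ^ N := (one_lt_div (by positivity)).2 hN
  obtain ⟨M, hle, hlt⟩ := Nat.exists_first_max_of_eventually_le (g := fun n => v (b n) / ρ ^ n)
    (N := N) (h.mono fun n hn => ((div_le_one (by positivity)).2 hn).trans hgN.le)
  have hgM : 1 < v (b M) / ρ ^ M := hgN.trans_le (hle N)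
  have hM0 : M ≠ 0 := by
    rintro rfl
    simp [b, pexp] at hgM
  have hbM : b M ≠ 0 := fun h0 => by norm_num [h0] at hgM
  obtain ⟨q, hqP, hq⟩ := Nat.exists_infinite_primes (P.natDegree + 1)
  have := Fact.mk hq
  obtain ⟨i, hi, i', hi', hne⟩ := hv.exists_apply_weightClassSum_ne hρ hbM hle hlt hq.one_lt
  exact hne (by
    rw [weightClassSum_coeff_pexp_eq hP0 (by omega) (mul_ne_zero hq.ne_zero hM0) hi hi'])

end CharZero

theorem statement_3_general (p : ℕ) [Fact p.Prime] (K : Type*) [Field K] [CharZero K]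
    (v : AbsoluteValue K ℝ)
    (hna : ∀ x y : K, v (x + y) ≤ max (v x) (v y))
    (hvp : v (p : K) = 1 / (p : ℝ))
    (P : Polynomial K) (hP0 : P.coeff 0 = 0)
    (b : ℕ → K) (hb : ∀ n, b n = PowerSeries.coeff n (pexp (P : PowerSeries K))) :
    Filter.limsup (fun n : ℕ => v (b n) ^ (1 / (n : ℝ))) Filter.atTop
      = ⨆ n : ℕ, v (b (n + 1)) ^ (1 / ((n : ℝ) + 1)) := by
  have hv : IsNonarchimedean v := hna
  obtain rfl : b = fun n => coeff n (pexp (P : K⟦X⟧)) := funext hb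
  have hkey (n : ℕ) :
      v (coeff (n + 1) (pexp (P : K⟦X⟧))) ^ (1 / ((n + 1 : ℕ) : ℝ)) ≤
        limsup (fun n => v (coeff n (pexp (P : K⟦X⟧))) ^ (1 / (n : ℝ))) atTop :=
    rpow_one_div_le_limsup (fun _ => v.nonneg _) (hv.isBoundedUnder_apply_coeff_pexp_rpow hvp P)
      (fun _ hρ h => hv.apply_coeff_pexp_le_pow_of_eventually_le hP0 hρ h) n.succ_ne_zero
  rw [limsup_eq_iSup_succ_of_le_limsup (fun _ => by positivity) hkey]
  push_cast
  rfl

theorem statement_3 (p : ℕ) [Fact p.Prime] (K : Type*) [Field K] [CharZero K]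
    (v : AbsoluteValue K ℝ)
    (hna : ∀ x y : K, v (x + y) ≤ max (v x) (v y))
    (hvp : v (p : K) = 1 / (p : ℝ))
    (P : Polynomial K) (hP0 : P.coeff 0 = 0) (hPne : P ≠ 0)
    (b : ℕ → K) (hb : ∀ n, b n = PowerSeries.coeff n (pexp (P : PowerSeries K))) :
    Filter.limsup (fun n : ℕ => v (b n) ^ (1 / (n : ℝ))) Filter.atTop
      = ⨆ n : ℕ, v (b (n + 1)) ^ (1 / ((n : ℝ) + 1)) :=
  statement_3_general p K v hna hvp P hP0 b hb
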